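/- arXiv:1012.4604 — 4 statements merged into one kernel-verified Lean document; each statement's English description precedes it below -/
import Mathlib

section
/- Let G be a group acting on a measurable space (X, 𝔄) whose action is totally nonfree, i.e., the σ-algebra generated by the fixed-point sets {fixedBy X g | g ∈ G} equals the full σ-algebra 𝔄 of X. Then the pullback under the stabilizer map Ψ of the σ-algebra 𝔅 on Subgroup G equals 𝔄; that is, MeasurableSpace.comap Ψ 𝔅 = 𝔄. -/
open MeasureTheory MulAction

/-- The σ-algebra 𝔅 on `Subgroup G` generated by the sets `L_g = {H | g ∈ H}`. -/
instance subgroupMeasurableSpace (G : Type*) [Group G] : MeasurableSpace (Subgroup G) :=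
  MeasurableSpace.generateFrom {s : Set (Subgroup G) | ∃ g : G, s = {H : Subgroup G | g ∈ H}}

section

variable {G X : Type*} [Group G] [MulAction G X]

theorem preimage_stabilizer_setOf_mem (g : G) :
    (fun x : X => stabilizer G x) ⁻¹' {H : Subgroup G | g ∈ H} = fixedBy X g :=
  rfl

theorem comap_stabilizer_subgroupMeasurableSpace :
    MeasurableSpace.comap (fun x : X => stabilizer G x) (subgroupMeasurableSpace G) =
      MeasurableSpace.generateFrom {s : Set X | ∃ g : G, s = fixedBy X g} := by
  rw [subgroupMeasurableSpace, MeasurableSpace.comap_generateFrom]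
  congr 1
  ext s
  constructor
  · rintro ⟨_, ⟨g, rfl⟩, rfl⟩
    exact ⟨g, preimage_stabilizer_setOf_mem g⟩
  · rintro ⟨g, rfl⟩
    exact ⟨_, ⟨g, rfl⟩, preimage_stabilizer_setOf_mem g⟩

end

/-- Corollary 3: if the action of `G` on `(X, 𝔄)` is totally nonfree, i.e. the σ-algebra
generated by the fixed-point sets `fixedBy X g` is the whole σ-algebra 𝔄 of `X`, then the
pullback under the stabilizer map of the σ-algebra 𝔅 on `Subgroup G` equals 𝔄. -/
theorem comap_stabilizer_of_totallyNonfree {G X : Type*} [Group G] [MulAction G X]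
    [m : MeasurableSpace X]
    (htnf : MeasurableSpace.generateFrom {s : Set X | ∃ g : G, s = MulAction.fixedBy X g} = m) :
    MeasurableSpace.comap (fun x : X => MulAction.stabilizer G x)
        (subgroupMeasurableSpace G) = m := by
  rw [comap_stabilizer_subgroupMeasurableSpace, htnf]
end

section
/- Let G be a group acting on a set X, and suppose the σ-algebra on X generated by the fixed-point sets {fixedBy X g | g ∈ G} separates points: for all x ≠ y in X there is a set A in this σ-algebra with x ∈ A and y ∉ A. Then the stabilizer map Ψ : X → Subgroup G is injective, i.e., distinct points of X have distinct stabilizers. -/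
open MeasureTheory MulAction

theorem MulAction.mem_fixedBy_iff_of_stabilizer_eq {G X : Type*} [Group G] [MulAction G X]
    {x y : X} (h : stabilizer G x = stabilizer G y) (g : G) :
    x ∈ fixedBy X g ↔ y ∈ fixedBy X g :=
  SetLike.ext_iff.mp h g

theorem MeasurableSpace.SeparatesPoints.of_exists_measurableSet {α : Type*} [MeasurableSpace α]
    (h : ∀ x y : α, x ≠ y → ∃ s, MeasurableSet s ∧ x ∈ s ∧ y ∉ s) :
    MeasurableSpace.SeparatesPoints α :=
  ⟨fun x y hxy => by_contra fun hne =>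
    let ⟨_, hs, hxs, hys⟩ := h x y hne
    hys (hxy _ hs hxs)⟩

/-- Pointwise form of Corollary 3: if the σ-algebra generated by the fixed-point sets
`fixedBy X g` separates points of `X`, then the stabilizer map `Ψ x = stabilizer G x`
is injective, i.e. distinct points have distinct stabilizers. -/
theorem stabilizer_injective_of_separating {G X : Type*} [Group G] [MulAction G X]
    (hsep : ∀ x y : X, x ≠ y → ∃ A : Set X,
      MeasurableSet[MeasurableSpace.generateFrom
        {s : Set X | ∃ g : G, s = MulAction.fixedBy X g}] A ∧ x ∈ A ∧ y ∉ A) :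
    Function.Injective (fun x : X => MulAction.stabilizer G x) := by
  let S : Set (Set X) := {s | ∃ g : G, s = fixedBy X g}
  let := MeasurableSpace.generateFrom S
  have := MeasurableSpace.SeparatesPoints.of_exists_measurableSet hsep
  intro x y hxy
  refine MeasurableSpace.separating_of_generateFrom S x y ?_
  rintro _ ⟨g, rfl⟩
  exact mem_fixedBy_iff_of_stabilizer_eq hxy g
end

section
/- Let G be a countable group acting measurably on standard Borel spaces X and X' equipped with G-invariant Borel probability measures μ and μ'. Assume both actions are extremely nonfree: there is a μ-conull set S ⊆ X on which the stabilizer map Ψ is injective, and a μ'-conull set S' ⊆ X' on which Ψ' is injective. If the pushforward measures on (Subgroup G, 𝔅) coincide, Measure.map Ψ μ = Measure.map Ψ' μ', then the two actions are metrically isomorphic: there exist G-invariant conull measurable sets A ⊆ X and B ⊆ X' and a bijection T : A → B that is measurable with measurable inverse, G-equivariant (T(g • x) = g • T(x) for all g ∈ G, x ∈ A), and measure-preserving for the restrictions of μ and μ'. -/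
/-
Choose invariant conull measurable sets `A₀ ⊆ S`, `B₀ ⊆ S'` (intersect the `G`-translates of a
conull measurable subset). The stabilizer maps are injective there, and `Subgroup G` is countably
separated, so by Lusin–Souslin they are Borel isomorphisms onto Borel images. Keep the points of
`A₀` and `B₀` whose stabilizers occur on the other side; since both measures push forward to the
same `ν`, this loses only null sets. Sending `x` to the point with the same stabilizer is then a
Borel isomorphism; it is equivariant because `Stab (g • x) = g Stab(x) g⁻¹` on both sides, and
measure preserving because after composing with the stabilizer embedding both measures become `ν`.
-/

open MeasureTheory MulAction Pointwise

open Set Function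

namespace Subgroup

variable {G : Type*} [Group G]

theorem measurableSet_setOf_mem (g : G) : MeasurableSet {H : Subgroup G | g ∈ H} :=
  MeasurableSpace.measurableSet_generateFrom ⟨g, rfl⟩

instance [Countable G] : HasCountableSeparatingOn (Subgroup G) MeasurableSet univ :=
  ⟨⟨range fun g : G => {H : Subgroup G | g ∈ H}, countable_range _,
    forall_mem_range.2 measurableSet_setOf_mem,
    fun _ _ _ _ h => Subgroup.ext fun g => h _ (mem_range_self g)⟩⟩

end Subgroup

section InvFunOn

variable {α β γ : Type*} {f : α → γ} {g : β → γ} {A : Set α} {B : Set β}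

theorem mapsTo_invFunOn_comp [Nonempty β] (h : f '' A ⊆ g '' B) :
    MapsTo (invFunOn g B ∘ f) A B :=
  fun _ hx => invFunOn_mem (h (mem_image_of_mem f hx))

theorem apply_invFunOn_comp [Nonempty β] (h : f '' A ⊆ g '' B) {x : α} (hx : x ∈ A) :
    g (invFunOn g B (f x)) = f x :=
  invFunOn_eq (h (mem_image_of_mem f hx))

theorem invOn_invFunOn_comp [Nonempty α] [Nonempty β] (hf : InjOn f A) (hg : InjOn g B)
    (h : f '' A = g '' B) :
    InvOn (invFunOn f A ∘ g) (invFunOn g B ∘ f) A B := by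
  have hfA : BijOn f A (f '' A) := hf.bijOn_image
  have hgB : BijOn g B (f '' A) := h ▸ hg.bijOn_image
  exact hfA.invOn_invFunOn.comp hgB.invOn_invFunOn.symm hfA.mapsTo hgB.mapsTo

theorem domRestrict_comp_restrict_invFunOn_comp [Nonempty β] (h : f '' A ⊆ g '' B) :
    B.domRestrict g ∘ (mapsTo_invFunOn_comp h).restrict _ A B = A.domRestrict f :=
  funext fun x => apply_invFunOn_comp h x.2

end InvFunOn

section Action

variable {G X Y : Type*} [Group G] [MulAction G X] [MulAction G Y]

theorem measurable_stabilizer [MeasurableSpace X] [MeasurableEq X] [MeasurableConstSMul G X] :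
    Measurable fun x : X => stabilizer G x :=
  measurable_generateFrom <| by
    rintro _ ⟨g, rfl⟩
    exact measurableSet_eq_fun (measurable_const_smul g) measurable_id

theorem smul_set_eq_self_of_forall_smul_set_subset {s : Set X} (h : ∀ g : G, g • s ⊆ s)
    (g : G) : g • s = s :=
  (h g).antisymm <| by simpa only [smul_inv_smul] using smul_set_mono (a := g) (h g⁻¹)

theorem exists_invariant_measurableSet_subset_of_measure_compl_eq_zero [Countable G]
    [MeasurableSpace X] [MeasurableConstSMul G X] {μ : Measure X} [SMulInvariantMeasure G X μ]
    {S : Set X} (hS : μ Sᶜ = 0) : ∃ A ⊆ S, MeasurableSet A ∧ μ Aᶜ = 0 ∧ ∀ g : G, g • A = A := by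
  set A₀ := (toMeasurable μ Sᶜ)ᶜ
  refine ⟨⋂ g : G, g • A₀, ?_, ?_, ?_, fun g => ?_⟩
  · refine (iInter_subset _ 1).trans ?_
    rw [one_smul, compl_subset_comm]
    exact subset_toMeasurable μ Sᶜ
  · exact .iInter fun g => (measurableSet_toMeasurable μ _).compl.const_smul g
  · rw [compl_iInter]
    refine measure_iUnion_null fun g => ?_
    rw [← smul_set_compl, compl_compl]
    exact measure_smul_null (by rwa [measure_toMeasurable]) g
  · rw [smul_set_iInter]
    simp_rw [smul_smul]
    exact (Equiv.mulLeft g).surjective.iInter_comp (· • A₀)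

theorem smul_inter_preimage_stabilizer_image {A : Set X} {B : Set Y}
    (hA : ∀ g : G, g • A = A) (hB : ∀ g : G, g • B = B) (g : G) :
    g • (A ∩ (fun x : X => stabilizer G x) ⁻¹' ((fun y : Y => stabilizer G y) '' B)) =
      A ∩ (fun x : X => stabilizer G x) ⁻¹' ((fun y : Y => stabilizer G y) '' B) := by
  refine smul_set_eq_self_of_forall_smul_set_subset (fun g => ?_) g
  rintro _ ⟨x, ⟨hx, y, hy, hxy⟩, rfl⟩
  refine ⟨(hA g).subset (smul_mem_smul_set hx), g • y, (hB g).subset (smul_mem_smul_set hy), ?_⟩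
  simp only [stabilizer_smul_eq_stabilizer_map_conj, hxy]

theorem invFunOn_stabilizer_smul [Nonempty Y] {A : Set X} {B : Set Y}
    (hA : ∀ g : G, g • A = A) (hB : ∀ g : G, g • B = B)
    (hinj : InjOn (fun y : Y => stabilizer G y) B)
    (h : (fun x : X => stabilizer G x) '' A ⊆ (fun y : Y => stabilizer G y) '' B)
    (g : G) {x : X} (hx : x ∈ A) :
    invFunOn (fun y : Y => stabilizer G y) B (stabilizer G (g • x)) =
      g • invFunOn (fun y : Y => stabilizer G y) B (stabilizer G x) := by
  have hgx : g • x ∈ A := (hA g).subset (smul_mem_smul_set hx)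
  have hx' : stabilizer G (invFunOn (fun y : Y => stabilizer G y) B (stabilizer G x)) =
      stabilizer G x := apply_invFunOn_comp h hx
  refine hinj (mapsTo_invFunOn_comp h hgx)
    ((hB g).subset (smul_mem_smul_set (mapsTo_invFunOn_comp h hx)))
    ((apply_invFunOn_comp h hgx).trans ?_)
  simp only [stabilizer_smul_eq_stabilizer_map_conj, hx']

end Action

section Matching

variable {α β γ : Type*} {f : α → γ} {g : β → γ} {A : Set α} {B : Set β}
  [MeasurableSpace α] [MeasurableSpace β] [MeasurableSpace γ]

theorem measure_compl_inter_preimage_image_eq_zero {μ : Measure α} {ν : Measure β}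
    (hf : Measurable f) (hg : Measurable g) (hfg : μ.map f = ν.map g)
    (hgB : MeasurableSet (g '' B)) (hμA : μ Aᶜ = 0) (hνB : ν Bᶜ = 0) :
    μ (A ∩ f ⁻¹' (g '' B))ᶜ = 0 := by
  refine compl_inter A _ ▸ measure_union_null hμA ?_
  rw [← preimage_compl, ← Measure.map_apply hf hgB.compl, hfg, Measure.map_apply hg hgB.compl]
  exact measure_mono_null (fun y hy hyB => hy (mem_image_of_mem g hyB)) hνB

variable [StandardBorelSpace β] [MeasurableSpace.CountablySeparated γ]

theorem measurableEmbedding_domRestrict (hg : Measurable g) (hB : MeasurableSet B)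
    (hinj : InjOn g B) : MeasurableEmbedding (B.domRestrict g) :=
  haveI := hB.standardBorel
  (hg.comp measurable_subtype_coe).measurableEmbedding (injOn_iff_injective.1 hinj)

theorem measurable_mapsTo_restrict_invFunOn_comp [Nonempty β] (hf : Measurable f)
    (hg : Measurable g) (hB : MeasurableSet B) (hinj : InjOn g B) (h : f '' A ⊆ g '' B) :
    Measurable ((mapsTo_invFunOn_comp h).restrict _ A B) := by
  refine (measurableEmbedding_domRestrict hg hB hinj).measurable_comp_iff.1 ?_
  rw [domRestrict_comp_restrict_invFunOn_comp h]
  exact hf.comp measurable_subtype_coe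

theorem map_invFunOn_comp_restrict [Nonempty β] {μ : Measure α} {ν : Measure β}
    (hf : Measurable f) (hg : Measurable g) (hA : MeasurableSet A) (hB : MeasurableSet B)
    (hinj : InjOn g B) (h : f '' A ⊆ g '' B) (hμA : μ Aᶜ = 0) (hνB : ν Bᶜ = 0)
    (hfg : μ.map f = ν.map g) : (μ.restrict A).map (invFunOn g B ∘ f) = ν.restrict B := by
  set φ := (mapsTo_invFunOn_comp h).restrict _ A B
  have hφ : Measurable φ := measurable_mapsTo_restrict_invFunOn_comp hf hg hB hinj h
  have emb := measurableEmbedding_domRestrict hg hB hinj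
  have hφmap : (μ.comap (↑)).map φ = ν.comap (↑) := by
    refine emb.map_injective ?_
    rw [Measure.map_map emb.measurable hφ, domRestrict_comp_restrict_invFunOn_comp h,
      domRestrict_eq, domRestrict_eq,
      ← Measure.map_map hf measurable_subtype_coe, ← Measure.map_map hg measurable_subtype_coe,
      map_comap_subtype_coe hA, map_comap_subtype_coe hB,
      Measure.restrict_eq_self_of_ae_mem hμA, Measure.restrict_eq_self_of_ae_mem hνB, hfg]
  have hT : AEMeasurable (invFunOn g B ∘ f) ((μ.comap (↑)).map ((↑) : A → α)) :=
    (MeasurableEmbedding.subtype_coe hA).aemeasurable_map_iff.2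
      (measurable_subtype_coe.comp hφ).aemeasurable
  rw [← map_comap_subtype_coe hA, hT.map_map_of_aemeasurable measurable_subtype_coe.aemeasurable,
    ← map_comap_subtype_coe hB, ← hφmap, Measure.map_map measurable_subtype_coe hφ]
  rfl

end Matching

/-- 'If' direction of Theorem 5: for extremely nonfree, measurable, measure-preserving actions
of a countable group `G` on standard Borel probability spaces, equality of the pushforward
measures under the stabilizer maps implies that the actions are metrically isomorphic:
there are invariant conull measurable sets `A`, `B` and a bimeasurable, `G`-equivariant,
measure-preserving bijection `T : A → B`. -/
theorem metrically_isomorphic_of_map_stabilizer_eq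
    {G X X' : Type*} [Group G] [Countable G]
    [MeasurableSpace X] [StandardBorelSpace X] [MeasurableSpace X'] [StandardBorelSpace X']
    [MulAction G X] [MulAction G X']
    (hmeas : ∀ g : G, Measurable (fun x : X => g • x))
    (hmeas' : ∀ g : G, Measurable (fun x : X' => g • x))
    (μ : Measure X) (μ' : Measure X') [IsProbabilityMeasure μ] [IsProbabilityMeasure μ']
    (hinv : ∀ g : G, Measure.map (fun x : X => g • x) μ = μ)
    (hinv' : ∀ g : G, Measure.map (fun x : X' => g • x) μ' = μ')
    (S : Set X) (hS : μ Sᶜ = 0)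
    (hSinj : Set.InjOn (fun x : X => MulAction.stabilizer G x) S)
    (S' : Set X') (hS' : μ' S'ᶜ = 0)
    (hS'inj : Set.InjOn (fun x : X' => MulAction.stabilizer G x) S')
    (hpush : Measure.map (fun x : X => MulAction.stabilizer G x) μ
           = Measure.map (fun x : X' => MulAction.stabilizer G x) μ') :
    ∃ (A : Set X) (B : Set X') (T : X → X') (Tinv : X' → X),
      MeasurableSet A ∧ MeasurableSet B ∧ μ Aᶜ = 0 ∧ μ' Bᶜ = 0 ∧
      (∀ g : G, g • A = A) ∧ (∀ g : G, g • B = B) ∧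
      Set.BijOn T A B ∧
      Measurable (fun a : A => T (a : X)) ∧
      Measurable (fun b : B => Tinv (b : X')) ∧
      (∀ x ∈ A, Tinv (T x) = x) ∧ (∀ y ∈ B, T (Tinv y) = y) ∧
      (∀ (g : G), ∀ x ∈ A, T (g • x) = g • T x) ∧
      Measure.map T (μ.restrict A) = μ'.restrict B := by
  have : MeasurableConstSMul G X := ⟨hmeas⟩
  have : MeasurableConstSMul G X' := ⟨hmeas'⟩
  have : SMulInvariantMeasure G X μ := ((smulInvariantMeasure_tfae G μ).out 0 5).2 hinv
  have : SMulInvariantMeasure G X' μ' := ((smulInvariantMeasure_tfae G μ').out 0 5).2 hinv'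
  have := nonempty_of_isProbabilityMeasure μ
  have := nonempty_of_isProbabilityMeasure μ'
  set Ψ := fun x : X => stabilizer G x
  set Ψ' := fun y : X' => stabilizer G y
  have hΨ : Measurable Ψ := measurable_stabilizer
  have hΨ' : Measurable Ψ' := measurable_stabilizer
  obtain ⟨A₀, hA₀S, hA₀, hμA₀, hA₀inv⟩ :=
    exists_invariant_measurableSet_subset_of_measure_compl_eq_zero (G := G) hS
  obtain ⟨B₀, hB₀S', hB₀, hμB₀, hB₀inv⟩ :=
    exists_invariant_measurableSet_subset_of_measure_compl_eq_zero (G := G) hS'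
  have hΨA₀ : MeasurableSet (Ψ '' A₀) := hA₀.image_of_measurable_injOn hΨ (hSinj.mono hA₀S)
  have hΨB₀ : MeasurableSet (Ψ' '' B₀) := hB₀.image_of_measurable_injOn hΨ' (hS'inj.mono hB₀S')
  set A := A₀ ∩ Ψ ⁻¹' (Ψ' '' B₀)
  set B := B₀ ∩ Ψ' ⁻¹' (Ψ '' A₀)
  have hA : MeasurableSet A := hA₀.inter (hΨ hΨB₀)
  have hB : MeasurableSet B := hB₀.inter (hΨ' hΨA₀)
  have hμA : μ Aᶜ = 0 := measure_compl_inter_preimage_image_eq_zero hΨ hΨ' hpush hΨB₀ hμA₀ hμB₀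
  have hμB : μ' Bᶜ = 0 :=
    measure_compl_inter_preimage_image_eq_zero hΨ' hΨ hpush.symm hΨA₀ hμB₀ hμA₀
  have hAB : Ψ '' A = Ψ' '' B := by rw [image_inter_preimage, image_inter_preimage, inter_comm]
  have hΨA : InjOn Ψ A := (hSinj.mono hA₀S).mono inter_subset_left
  have hΨB : InjOn Ψ' B := (hS'inj.mono hB₀S').mono inter_subset_left
  have hAinv := smul_inter_preimage_stabilizer_image hA₀inv hB₀inv
  have hBinv := smul_inter_preimage_stabilizer_image hB₀inv hA₀inv
  have hinvOn := invOn_invFunOn_comp hΨA hΨB hAB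
  have hbij := hinvOn.bijOn (mapsTo_invFunOn_comp hAB.subset) (mapsTo_invFunOn_comp hAB.symm.subset)
  exact ⟨A, B, invFunOn Ψ' B ∘ Ψ, invFunOn Ψ A ∘ Ψ', hA, hB, hμA, hμB, hAinv, hBinv, hbij,
    measurable_subtype_coe.comp
      (measurable_mapsTo_restrict_invFunOn_comp hΨ hΨ' hB hΨB hAB.subset),
    measurable_subtype_coe.comp
      (measurable_mapsTo_restrict_invFunOn_comp hΨ' hΨ hA hΨA hAB.symm.subset),
    hinvOn.1, hinvOn.2, fun g _ => invFunOn_stabilizer_smul hAinv hBinv hΨB hAB.subset g,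
    map_invFunOn_comp_restrict hΨ hΨ' hA hB hΨB hAB.subset hμA hμB hpush⟩
end

section
/- Let G be a countable group and ν a finite measure on Subgroup G (with the σ-algebra 𝔅) such that ν-almost every subgroup is self-normalizing (the complement of {H | H.normalizer = H} is ν-null). Say a family 𝒞 of measurable subsets of Subgroup G generates the full σ-algebra mod ν if for every A ∈ 𝔅 there is a set B in the σ-algebra generated by 𝒞 with ν(A Δ B) = 0. Then the family of conjugation fixed-point sets {Fix_g = {H | gHg⁻¹ = H} : g ∈ G} generates the full σ-algebra mod ν if and only if the family {L_g = {H | g ∈ H} : g ∈ G, ν(L_g) > 0} generates the full σ-algebra mod ν. -/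
/-!
`Fix_g` is the set of subgroups whose normalizer contains `g`, so it agrees with `L_g` on every
self-normalizing subgroup, hence `ν`-almost everywhere. Each family therefore approximates the
generators of the other mod `ν`, the `L_g` with `ν(L_g) = 0` being approximated by `∅`; and sets
approximable mod `ν` by a σ-algebra form a σ-algebra.
-/

open MeasureTheory MulAction symmDiff

/-- A family `C` of subsets of a measurable space generates the full σ-algebra mod `ν` if every
measurable set agrees `ν`-almost everywhere (null symmetric difference) with a set in the
σ-algebra generated by `C`. -/
def GeneratesMod {α : Type*} [MeasurableSpace α] (ν : Measure α) (C : Set (Set α)) : Prop :=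
  ∀ A : Set α, MeasurableSet A →
    ∃ B : Set α, MeasurableSet[MeasurableSpace.generateFrom C] B ∧ ν (A ∆ B) = 0

section GeneratesMod

variable {α : Type*} [MeasurableSpace α] (ν : Measure α)

theorem exists_measurableSet_ae_eq_of_generateFrom (m : MeasurableSpace α) {C : Set (Set α)}
    (hC : ∀ s ∈ C, ∃ t, MeasurableSet[m] t ∧ s =ᵐ[ν] t) {A : Set α}
    (hA : MeasurableSet[MeasurableSpace.generateFrom C] A) :
    ∃ t, MeasurableSet[m] t ∧ A =ᵐ[ν] t := by
  induction hA with
  | basic s hs => exact hC s hs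
  | empty => exact ⟨∅, @MeasurableSet.empty _ m, .rfl⟩
  | compl s _ ih =>
    obtain ⟨t, ht, hst⟩ := ih
    exact ⟨tᶜ, ht.compl, hst.compl⟩
  | iUnion f _ ih =>
    choose t ht hft using ih
    exact ⟨⋃ n, t n, MeasurableSet.iUnion ht, Filter.EventuallyEq.countable_iUnion hft⟩

variable {ν}

theorem GeneratesMod.of_forall_ae_eq {C D : Set (Set α)} (hC : GeneratesMod ν C)
    (hCD : ∀ s ∈ C, ∃ t, MeasurableSet[MeasurableSpace.generateFrom D] t ∧ s =ᵐ[ν] t) :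
    GeneratesMod ν D := by
  intro A hA
  obtain ⟨B, hB, hAB⟩ := hC A hA
  obtain ⟨t, ht, hBt⟩ := exists_measurableSet_ae_eq_of_generateFrom ν _ hCD hB
  exact ⟨t, ht, measure_symmDiff_eq_zero_iff.2 ((measure_symmDiff_eq_zero_iff.1 hAB).trans hBt)⟩

end GeneratesMod

theorem Subgroup.setOf_map_conj_eq_ae_eq_setOf_mem {G : Type*} [Group G]
    {ν : Measure (Subgroup G)} (h : ∀ᵐ H : Subgroup G ∂ν, normalizer (H : Set G) = H) (g : G) :
    {H : Subgroup G | H.map (MulAut.conj g).toMonoidHom = H} =ᵐ[ν] {H : Subgroup G | g ∈ H} := by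
  filter_upwards [h] with H hH
  exact propext (hH ▸ Subgroup.mem_normalizer_iff_map_conj_eq).symm

theorem totallyNonfree_iff_memSets_generate_general {G : Type*} [Group G]
    (ν : Measure (Subgroup G))
    (h : ν {H : Subgroup G | Subgroup.normalizer (H : Set G) = H}ᶜ = 0) :
    GeneratesMod ν {s : Set (Subgroup G) |
        ∃ g : G, s = {H : Subgroup G | Subgroup.map (MulAut.conj g).toMonoidHom H = H}}
      ↔ GeneratesMod ν {s : Set (Subgroup G) |
        ∃ g : G, 0 < ν {H : Subgroup G | g ∈ H} ∧ s = {H : Subgroup G | g ∈ H}} := by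
  have hfix := Subgroup.setOf_map_conj_eq_ae_eq_setOf_mem (ν := ν) h
  constructor
  · refine fun hFix ↦ hFix.of_forall_ae_eq ?_
    rintro _ ⟨g, rfl⟩
    rcases eq_zero_or_pos (ν {H : Subgroup G | g ∈ H}) with hg | hg
    · exact ⟨∅, @MeasurableSet.empty _ (MeasurableSpace.generateFrom _),
        (hfix g).trans (ae_eq_empty.2 hg)⟩
    · exact ⟨_, MeasurableSpace.measurableSet_generateFrom ⟨g, hg, rfl⟩, hfix g⟩
  · refine fun hL ↦ hL.of_forall_ae_eq ?_
    rintro _ ⟨g, -, rfl⟩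
    exact ⟨_, MeasurableSpace.measurableSet_generateFrom ⟨g, rfl⟩, (hfix g).symm⟩

/-- Proposition 8: let `ν` be a finite measure on `Subgroup G` (`G` countable) such that
`ν`-almost every subgroup is self-normalizing. Then the conjugation fixed-point sets
`Fix_g = {H | gHg⁻¹ = H}` generate the full σ-algebra mod `ν` if and only if the sets
`L_g = {H | g ∈ H}` of positive `ν`-measure generate the full σ-algebra mod `ν`. -/
theorem totallyNonfree_iff_memSets_generate {G : Type*} [Group G] [Countable G]
    (ν : Measure (Subgroup G)) [IsFiniteMeasure ν]
    (h : ν {H : Subgroup G | Subgroup.normalizer (H : Set G) = H}ᶜ = 0) :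
    GeneratesMod ν {s : Set (Subgroup G) |
        ∃ g : G, s = {H : Subgroup G | Subgroup.map (MulAut.conj g).toMonoidHom H = H}}
      ↔ GeneratesMod ν {s : Set (Subgroup G) |
        ∃ g : G, 0 < ν {H : Subgroup G | g ∈ H} ∧ s = {H : Subgroup G | g ∈ H}} :=
  totallyNonfree_iff_memSets_generate_general ν h
end
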